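/- Let p be a prime, k a field of characteristic p, and A a unital associative k-algebra. For n ≥ 2 let b_n : A^{⊗n} → A^{⊗(n−1)} be the unsigned bar map b_n(a_1⊗⋯⊗a_n) = ∑_{j=1}^{n−1} a_1⊗⋯⊗a_j a_{j+1}⊗⋯⊗a_n, and set b_1 = 0. Then for every n ≥ 1 the p-fold composite b_{n+1}∘b_{n+2}∘⋯∘b_{n+p} : A^{⊗(n+p)} → A^{⊗n} is the zero map. (Mayer's unsigned bar differential ∂_H satisfies ∂_H^p = 0.) -/

import Mathlib

/-!
Let `S(n, N) : A^{⊗(N+1)} → A^{⊗(n+1)}` be the sum of all ways of merging consecutive factors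
into `n + 1` blocks. A merge of `N + 2` factors into `n + 1` blocks glues `N + 1 - n` adjacent
pairs, and the bar map may have glued any one of them first, so
`S(n, N) ∘ b = (N + 1 - n) • S(n, N + 1)`. Starting from `S(n, n) = id`, the `m`-fold composite
of bar maps is therefore `m! • S(n, n + m)`, which vanishes for `m = p` because `p ∣ p!`.
-/

open TensorProduct

universe u

/-- `Tpow2M k A n` is the `(n+1)`-fold tensor power `A^{⊗(n+1)}` over `k`. -/
noncomputable def Tpow2M (k A : Type u) [CommRing k] [Ring A] [Algebra k A] :
    ℕ → ModuleCat.{u} k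
  | 0 => ModuleCat.of k A
  | (n + 1) => ModuleCat.of k (TensorProduct k A (Tpow2M k A n))

variable (k A : Type u) [CommRing k] [Ring A] [Algebra k A]

/-- The unsigned bar map `b_{n+2} : A^{⊗(n+2)} → A^{⊗(n+1)}`,
`a_1⊗⋯⊗a_m ↦ ∑_j a_1⊗⋯⊗a_j a_{j+1}⊗⋯⊗a_m` (no signs), defined recursively by
`b(a ⊗ x) = (mult on the first two factors)(a ⊗ x) + a ⊗ b(x)`. -/
noncomputable def bar2Map : (n : ℕ) → (↥(Tpow2M k A (n + 1)) →ₗ[k] ↥(Tpow2M k A n))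
  | 0 => LinearMap.mul' k A
  | (n + 1) =>
      ((LinearMap.rTensor (↥(Tpow2M k A n)) (LinearMap.mul' k A)
          ∘ₗ (TensorProduct.assoc k A A (↥(Tpow2M k A n))).symm.toLinearMap)
        + (LinearMap.lTensor A (bar2Map n) :
            A ⊗[k] (A ⊗[k] ↥(Tpow2M k A n)) →ₗ[k] A ⊗[k] ↥(Tpow2M k A n)))

/-- The `m`-fold composite `b_{n+2} ∘ b_{n+3} ∘ ⋯ ∘ b_{n+m+1} : A^{⊗(n+m+1)} → A^{⊗(n+1)}`
of unsigned bar maps. -/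
noncomputable def bar2Comp : (n m : ℕ) → (↥(Tpow2M k A (n + m)) →ₗ[k] ↥(Tpow2M k A n))
  | _, 0 => LinearMap.id
  | n, (m + 1) => bar2Comp n m ∘ₗ bar2Map k A (n + m)

noncomputable def tensorCons (n : ℕ) : A →ₗ[k] Tpow2M k A n →ₗ[k] Tpow2M k A (n + 1) :=
  TensorProduct.mk k A (Tpow2M k A n)

noncomputable def mulHead : (n : ℕ) → (A ⊗[k] Tpow2M k A n →ₗ[k] Tpow2M k A n)
  | 0 => LinearMap.mul' k A
  | n + 1 => (LinearMap.mul' k A).rTensor (Tpow2M k A n) ∘ₗ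
      (TensorProduct.assoc k A A (Tpow2M k A n)).symm.toLinearMap

/-- The sum, over all ways of cutting `a₀ ⊗ ⋯ ⊗ a_N` into `n + 1` nonempty consecutive blocks, of
the tensor of the block products. The recursion splits on whether `a₀` is a block by itself. -/
noncomputable def mergeSum : (n N : ℕ) → (Tpow2M k A N →ₗ[k] Tpow2M k A n)
  | 0, 0 => LinearMap.id
  | _ + 1, 0 => 0
  | 0, N + 1 => mulHead k A 0 ∘ₗ (mergeSum 0 N).lTensor A
  | n + 1, N + 1 =>
      (mergeSum n N).lTensor A + (mulHead k A (n + 1) ∘ₗ (mergeSum (n + 1) N).lTensor A :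
        A ⊗[k] Tpow2M k A N →ₗ[k] A ⊗[k] Tpow2M k A n)

variable {k A}

theorem Tpow2M.induction_on {n : ℕ} {P : Tpow2M k A (n + 1) → Prop} (x : Tpow2M k A (n + 1))
    (zero : P 0) (cons : ∀ a y, P (tensorCons k A n a y)) (add : ∀ y z, P y → P z → P (y + z)) :
    P x :=
  TensorProduct.induction_on x zero cons add

theorem Tpow2M.linearMap_ext {n : ℕ} {M : Type*} [AddCommMonoid M] [Module k M]
    {f g : Tpow2M k A (n + 1) →ₗ[k] M}
    (h : ∀ a y, f (tensorCons k A n a y) = g (tensorCons k A n a y)) : f = g :=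
  TensorProduct.ext' h

theorem mulHead_succ_cons (n : ℕ) (a b : A) (x : Tpow2M k A n) :
    mulHead k A (n + 1) (a ⊗ₜ tensorCons k A n b x) = tensorCons k A n (a * b) x := rfl

theorem bar2Map_zero_cons (a : A) (b : Tpow2M k A 0) :
    bar2Map k A 0 (tensorCons k A 0 a b) = mulHead k A 0 (a ⊗ₜ b) := rfl

theorem bar2Map_succ_cons (n : ℕ) (a : A) (y : Tpow2M k A (n + 1)) :
    bar2Map k A (n + 1) (tensorCons k A (n + 1) a y) =
      mulHead k A (n + 1) (a ⊗ₜ y) + tensorCons k A n a (bar2Map k A n y) := rfl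

theorem mergeSum_zero_succ_cons (N : ℕ) (a : A) (x : Tpow2M k A N) :
    mergeSum k A 0 (N + 1) (tensorCons k A N a x) = mulHead k A 0 (a ⊗ₜ mergeSum k A 0 N x) := rfl

theorem mergeSum_succ_succ_cons (n N : ℕ) (a : A) (x : Tpow2M k A N) :
    mergeSum k A (n + 1) (N + 1) (tensorCons k A N a x) =
      tensorCons k A n a (mergeSum k A n N x) +
        mulHead k A (n + 1) (a ⊗ₜ mergeSum k A (n + 1) N x) := rfl

theorem mulHead_mulHead (n : ℕ) (a b : A) (x : Tpow2M k A n) :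
    mulHead k A n (a ⊗ₜ mulHead k A n (b ⊗ₜ x)) = mulHead k A n ((a * b) ⊗ₜ x) := by
  cases n with
  | zero => exact (mul_assoc (G := A) a b x).symm
  | succ n =>
    induction x using Tpow2M.induction_on with
    | zero => simp
    | cons c x => simp only [mulHead_succ_cons, mul_assoc]
    | add y z hy hz => simp only [tmul_add, map_add, hy, hz]

theorem mergeSum_eq_zero_of_lt {N n : ℕ} (h : N < n) : mergeSum k A n N = 0 := by
  induction N generalizing n with
  | zero =>
    obtain _ | n := n
    · omega
    · rfl
  | succ N ih =>
    obtain _ | n := n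
    · omega
    · refine Tpow2M.linearMap_ext fun a y => ?_
      simp [mergeSum_succ_succ_cons, ih (n := n) (by omega), ih (n := n + 1) (by omega)]

theorem mergeSum_self (n : ℕ) : mergeSum k A n n = LinearMap.id := by
  induction n with
  | zero => rfl
  | succ n ih =>
    refine Tpow2M.linearMap_ext fun a y => ?_
    simp [mergeSum_succ_succ_cons, ih, mergeSum_eq_zero_of_lt (Nat.lt_succ_self n)]

theorem mergeSum_mulHead (n N : ℕ) (a : A) (x : Tpow2M k A N) :
    mergeSum k A n N (mulHead k A N (a ⊗ₜ x)) = mulHead k A n (a ⊗ₜ mergeSum k A n N x) := by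
  obtain _ | N := N
  · obtain _ | n := n
    · rfl
    · simp [mergeSum_eq_zero_of_lt (Nat.succ_pos n)]
  induction x using Tpow2M.induction_on with
  | zero => simp
  | add y z hy hz => simp only [tmul_add, map_add, hy, hz]
  | cons b y =>
    obtain _ | n := n
    · rw [mulHead_succ_cons, mergeSum_zero_succ_cons, mergeSum_zero_succ_cons, mulHead_mulHead]
    · rw [mulHead_succ_cons, mergeSum_succ_succ_cons, mergeSum_succ_succ_cons, tmul_add, map_add,
        mulHead_succ_cons, mulHead_mulHead]

theorem mergeSum_bar2Map_of_lt {N n : ℕ} (h : N < n) (x : Tpow2M k A (N + 1)) :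
    mergeSum k A n N (bar2Map k A N x) = (N + 1 - n) • mergeSum k A n (N + 1) x := by
  simp [mergeSum_eq_zero_of_lt h, Nat.sub_eq_zero_of_le h]

theorem mergeSum_bar2Map (N n : ℕ) (x : Tpow2M k A (N + 1)) :
    mergeSum k A n N (bar2Map k A N x) = (N + 1 - n) • mergeSum k A n (N + 1) x := by
  induction N generalizing n with
  | zero =>
    obtain _ | n := n
    · induction x using Tpow2M.induction_on with
      | zero => simp
      | add y z hy hz => simp only [map_add, hy, hz, smul_add]
      | cons a b =>
        rw [mergeSum_self, LinearMap.id_apply, bar2Map_zero_cons, mergeSum_zero_succ_cons,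
          mergeSum_self, LinearMap.id_apply, Nat.sub_zero, zero_add, one_smul]
    · exact mergeSum_bar2Map_of_lt (Nat.succ_pos n) x
  | succ N ih =>
    induction x using Tpow2M.induction_on with
    | zero => simp
    | add y z hy hz => simp only [map_add, hy, hz, smul_add]
    | cons a y =>
      obtain _ | m := n
      · rw [bar2Map_succ_cons, map_add, mergeSum_mulHead, mergeSum_zero_succ_cons, ih,
          mergeSum_zero_succ_cons, tmul_smul, map_nsmul, ← succ_nsmul', Nat.sub_zero, Nat.sub_zero]
      obtain hNm | hmN := lt_or_ge N m
      · exact mergeSum_bar2Map_of_lt (by omega) _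
      rw [bar2Map_succ_cons, map_add, mergeSum_mulHead, mergeSum_succ_succ_cons, ih, ih,
        mergeSum_succ_succ_cons, tmul_smul, map_nsmul, map_nsmul,
        show N + 1 + 1 - (m + 1) = N - m + 1 by omega, show N + 1 - m = N - m + 1 by omega,
        show N + 1 - (m + 1) = N - m by omega, smul_add, succ_nsmul, succ_nsmul]
      abel

theorem bar2Comp_eq_factorial_smul_mergeSum (n m : ℕ) :
    bar2Comp k A n m = m.factorial • mergeSum k A n (n + m) := by
  induction m with
  | zero => simp [bar2Comp, mergeSum_self]
  | succ m ih =>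
    refine LinearMap.ext fun x => ?_
    rw [bar2Comp, LinearMap.comp_apply, ih, LinearMap.smul_apply, mergeSum_bar2Map,
      LinearMap.smul_apply, smul_smul, Nat.factorial_succ, show n + m + 1 - n = m + 1 by omega,
      mul_comm]
    rfl

theorem stmt_2 (p : ℕ) (hp : p.Prime) (k A : Type u) [Field k] [CharP k p]
    [Ring A] [Algebra k A] :
    ∀ n : ℕ, bar2Comp k A n p = 0 := by
  intro n
  have hfact : (p.factorial : k) = 0 :=
    (CharP.cast_eq_zero_iff k p _).mpr (Nat.dvd_factorial hp.pos le_rfl)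
  rw [bar2Comp_eq_factorial_smul_mergeSum, ← Nat.cast_smul_eq_nsmul k, hfact, zero_smul]
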